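/- Let λ ∈ Γ_{μ+2} with λ₁ ≥ ⋯ ≥ λₙ. There exists a constant C depending only on n and μ such that for all indices i ≥ μ+1, |λ_i| ≤ C·λ_{μ+1}, and for all a, b ≤ μ with a ≠ b: σ_{μ−1}(λ|ab) ≤ C·(λ₁⋯λ_{μ+1})/(λ_a λ_b). -/

import Mathlib

/-- The `m`-th elementary symmetric polynomial of `x : Fin n → ℝ`. -/
noncomputable def esymm (n m : ℕ) (x : Fin n → ℝ) : ℝ :=
  ∑ s ∈ Finset.powersetCard m (Finset.univ : Finset (Fin n)), ∏ i ∈ s, x i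

/-- The `m`-th elementary symmetric polynomial of the entries of `x` with indices in `s`. -/
noncomputable def esymmRes (n : ℕ) (s : Finset (Fin n)) (m : ℕ) (x : Fin n → ℝ) : ℝ :=
  ∑ t ∈ Finset.powersetCard m s, ∏ i ∈ t, x i

/-!
If `λ ∈ Γ_k`, deleting one entry leaves a vector in `Γ_{k-1}`. Shift all entries by `t ≥ 0`:
`σ_m(λ + t)` is a polynomial in `t` whose coefficients are nonnegative multiples of
`σ_0(λ), …, σ_m(λ)`, so the shifted vector stays in `Γ_k`, while for large `t` the shortened one
lies in `Γ_{k-1}` trivially. If it does not at `t = 0`, the intermediate value theorem applied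
to `min_m σ_m` gives a `t` at which the shortened vector `ν` has all `σ_m(ν) ≥ 0` and some
`σ_m(ν) = 0`; at the first such `m`, `σ_{m-1}(ν) > 0` and
`σ_{m+1}(ν) = σ_{m+1}(λ + t) - (λ_a + t) σ_m(ν) > 0`. Real numbers never show this sign pattern:
differentiating `∏ (X - ν_i)` keeps all roots real and multiplies each `σ_l` of the roots by a
positive factor (for `l < card ν`), which reduces it to `m + 1` numbers, where
`σ_m² - 2 σ_{m-1} σ_{m+1} = σ_m(ν_1², …, ν_{m+1}²) ≥ 0`.

Deleting the `μ` largest entries of `λ ∈ Γ_{μ+2}` therefore leaves a positive sum, so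
`λ_{μ+1} > 0` and every later entry is at most `n λ_{μ+1}` in absolute value. Each monomial of
`σ_{μ-1}(λ|ab)` is then compared with `∏_{i ≤ μ+1, i ≠ a, b} λ_i` by trading every factor of
index `> μ+1` for a missing factor of index `≤ μ+1`.
-/

namespace Multiset

open Polynomial

section CommSemiring

variable {R : Type*} [CommSemiring R]

theorem esymm_zero (s : Multiset R) : s.esymm 0 = 1 := by
  simp [esymm]

theorem esymm_eq_zero_of_card_lt (s : Multiset R) {m : ℕ} (h : card s < m) : s.esymm m = 0 := by
  simp [esymm, powersetCard_eq_empty _ h]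

theorem esymm_cons (a : R) (s : Multiset R) (m : ℕ) :
    (a ::ₘ s).esymm (m + 1) = s.esymm (m + 1) + a * s.esymm m := by
  simp [esymm, powersetCard_cons, sum_map_mul_left]

theorem esymm_map_add_const (s : Multiset R) (t : R) {m : ℕ} (hm : m ≤ card s) :
    (s.map (· + t)).esymm m = ∑ j ∈ Finset.range (card s + 1),
      ((card s - j).choose (card s - m) : R) * s.esymm j * t ^ (m - j) := by
  have hcomp : ((s.map (· + t)).map fun r => X + C r).prod
      = (s.map fun r => X + C r).prod.comp (X + C t) := by
    simp only [multiset_prod_comp, map_map, Function.comp_def, add_comp, X_comp, C_comp, C_add]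
    exact congrArg _ (map_congr rfl fun r _ => by ring)
  have hcoeff := prod_X_add_C_coeff (s.map (· + t)) (k := card s - m) (by simp)
  rw [card_map, Nat.sub_sub_self hm, hcomp, prod_X_add_C_eq_sum_esymm] at hcoeff
  rw [← hcoeff]
  simp only [sum_comp, mul_comp, C_comp, X_pow_comp, finsetSum_coeff, coeff_C_mul,
    coeff_X_add_C_pow]
  refine Finset.sum_congr rfl fun j hj => ?_
  rw [Finset.mem_range] at hj
  rw [show card s - j - (card s - m) = m - j by omega]
  ring

end CommSemiring

theorem two_mul_esymm_mul_le_sq {s : Multiset ℝ} {m : ℕ} (hs : card s = m + 2) :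
    2 * (s.esymm m * s.esymm (m + 2)) ≤ s.esymm (m + 1) ^ 2 := by
  induction m generalizing s with
  | zero =>
    obtain ⟨x, y, rfl⟩ := card_eq_two.1 hs
    simp only [zero_add, insert_eq_cons, esymm_zero, esymm_pair_one, esymm_pair_two]
    nlinarith [sq_nonneg x, sq_nonneg y]
  | succ m ih =>
    obtain ⟨a, s, rfl, hs'⟩ := card_eq_succ_iff.1 hs
    rw [esymm_cons a s m, esymm_cons a s (m + 1), show m + 1 + 2 = m + 2 + 1 from rfl,
      esymm_cons a s (m + 2), esymm_eq_zero_of_card_lt s (by omega : card s < m + 2 + 1)]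
    nlinarith [mul_le_mul_of_nonneg_left (ih hs') (sq_nonneg a), sq_nonneg (s.esymm (m + 2))]

theorem card_roots_derivative_prod_X_sub_C (s : Multiset ℝ) :
    card (derivative (s.map fun a => X - C a).prod).roots = card s - 1 := by
  have h1 := card_roots_le_derivative (s.map fun a => X - C a).prod
  have h2 := card_roots' (derivative (s.map fun a => X - C a).prod)
  have h3 := natDegree_derivative_le (s.map fun a => X - C a).prod
  rw [roots_multiset_prod_X_sub_C] at h1
  rw [natDegree_multiset_prod_X_sub_C_eq_card] at h3
  omega

theorem card_mul_esymm_roots_derivative_prod_X_sub_C (s : Multiset ℝ) (l : ℕ) :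
    (card s : ℝ) * (derivative (s.map fun a => X - C a).prod).roots.esymm l
      = ((card s - l : ℕ) : ℝ) * s.esymm l := by
  have hcard := card_roots_derivative_prod_X_sub_C s
  have hp := fun k (hk : k ≤ card s) => prod_X_sub_C_coeff s hk
  have hdegp := natDegree_derivative_le (s.map fun a => X - C a).prod
  rw [natDegree_multiset_prod_X_sub_C_eq_card] at hdegp
  generalize (s.map fun a => X - C a).prod = p at hcard hp hdegp ⊢
  rcases le_or_gt (card s) l with hl | hl
  · rw [Nat.sub_eq_zero_of_le hl, Nat.cast_zero, zero_mul]
    rcases Nat.eq_zero_or_pos (card s) with h | h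
    · rw [h, Nat.cast_zero, zero_mul]
    · rw [esymm_eq_zero_of_card_lt _ (by omega), mul_zero]
  obtain ⟨M, hM⟩ : ∃ M, card s = M + 1 := ⟨card s - 1, by omega⟩
  rw [hM] at hcard hp hdegp hl ⊢
  simp only [add_tsub_cancel_right] at hcard hdegp
  have hq : ∀ k, (derivative p).coeff k = p.coeff (k + 1) * (k + 1) := coeff_derivative p
  have hlead : (derivative p).coeff M = M + 1 := by
    rw [hq, hp _ le_rfl]
    simp [esymm_zero]
  have hdeg : (derivative p).natDegree = M :=
    le_antisymm hdegp (le_natDegree_of_ne_zero (by rw [hlead]; positivity))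
  replace hl : l ≤ M := by omega
  have hvieta :=
    coeff_eq_esymm_roots_of_card (hcard.trans hdeg.symm) (k := M - l) (by rw [hdeg]; omega)
  rw [hq, hp _ (by omega), leadingCoeff, hdeg, hlead, show M - (M - l) = l by omega,
    show M + 1 - (M - l + 1) = l by omega] at hvieta
  push_cast [show M + 1 - l = M - l + 1 by omega, Nat.cast_sub hl] at hvieta ⊢
  apply mul_left_cancel₀ (pow_ne_zero l (by norm_num : (-1 : ℝ) ≠ 0))
  linear_combination -hvieta

theorem esymm_add_two_nonpos {s : Multiset ℝ} {m : ℕ} (hm : 0 < s.esymm m)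
    (hm1 : s.esymm (m + 1) = 0) : s.esymm (m + 2) ≤ 0 := by
  rcases lt_or_ge (card s) (m + 2) with hs | hs
  · exact (esymm_eq_zero_of_card_lt s hs).le
  obtain ⟨k, hk⟩ := Nat.exists_eq_add_of_le hs
  clear hs
  induction k generalizing s with
  | zero => nlinarith [two_mul_esymm_mul_le_sq hk]
  | succ k ih =>
    have hr := card_mul_esymm_roots_derivative_prod_X_sub_C s
    have hcard : card (derivative (s.map fun a => X - C a).prod).roots = m + 2 + k := by
      rw [card_roots_derivative_prod_X_sub_C, hk]; omega
    generalize (derivative (s.map fun a => X - C a).prod).roots = r at hr hcard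
    have hc : ∀ l ≤ m + 2, (0 : ℝ) < ((card s - l : ℕ) : ℝ) := fun l hl => by
      rw [hk]; exact_mod_cast (by omega : 0 < m + 2 + (k + 1) - l)
    have hN : (0 : ℝ) < card s := by rw [hk]; positivity
    have hrm : 0 < r.esymm m := pos_of_mul_pos_right (by nlinarith [hr m, hc m (by omega)]) hN.le
    have hrm1 : r.esymm (m + 1) = 0 := by
      simpa [hm1, hN.ne'] using hr (m + 1)
    nlinarith [ih hrm hrm1 hcard, hr (m + 2), hc (m + 2) le_rfl]

theorem continuous_esymm_map_add_const (s : Multiset ℝ) (m : ℕ) :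
    Continuous fun t : ℝ => (s.map (· + t)).esymm m := by
  rcases lt_or_ge (card s) m with hm | hm
  · have h0 : ∀ t : ℝ, (s.map (· + t)).esymm m = 0 := fun t =>
      esymm_eq_zero_of_card_lt _ (by simpa using hm)
    simp only [h0]
    exact continuous_const
  simp only [esymm_map_add_const s _ hm]
  fun_prop

theorem esymm_pos_of_forall_pos {s : Multiset ℝ} (hs : ∀ a ∈ s, 0 < a) {m : ℕ}
    (hm : m ≤ card s) : 0 < s.esymm m := by
  induction s using Multiset.induction_on generalizing m with
  | empty => simp_all [esymm_zero]
  | cons a s ih =>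
    rcases m with _ | m
    · simp [esymm_zero]
    rw [esymm_cons]
    have ha : 0 < a := hs a (mem_cons_self a s)
    have hs' : ∀ b ∈ s, 0 < b := fun b hb => hs b (mem_cons_of_mem hb)
    have h1 : 0 ≤ s.esymm (m + 1) := by
      rcases lt_or_ge (card s) (m + 1) with h | h
      · exact (esymm_eq_zero_of_card_lt s h).ge
      · exact (ih hs' h).le
    have h2 := ih hs' (m := m) (by simpa using hm)
    positivity

def InGardingCone (k : ℕ) (s : Multiset ℝ) : Prop :=
  ∀ m, 1 ≤ m → m ≤ k → 0 < s.esymm m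

namespace InGardingCone

variable {k : ℕ} {s : Multiset ℝ}

theorem le_card (h : InGardingCone k s) : k ≤ card s := by
  by_contra hk
  rcases Nat.eq_zero_or_pos k with rfl | hk0
  · omega
  · exact (h k hk0 le_rfl).ne' (esymm_eq_zero_of_card_lt s (by omega))

theorem of_forall_pos (hs : ∀ a ∈ s, 0 < a) (hk : k ≤ card s) : InGardingCone k s :=
  fun _ _ hm => esymm_pos_of_forall_pos hs (hm.trans hk)

theorem map_add_const (h : InGardingCone k s) {t : ℝ} (ht : 0 ≤ t) :
    InGardingCone k (s.map (· + t)) := by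
  intro m hm1 hmk
  have hcard := h.le_card
  rw [esymm_map_add_const s t (by omega)]
  have hterm : ∀ j ∈ Finset.range (card s + 1),
      0 ≤ ((card s - j).choose (card s - m) : ℝ) * s.esymm j * t ^ (m - j) := by
    intro j hjN
    rw [Finset.mem_range] at hjN
    rcases Nat.lt_or_ge m j with hj | hj
    · rw [Nat.choose_eq_zero_of_lt (by omega)]; simp
    rcases Nat.eq_zero_or_pos j with rfl | hj0
    · rw [esymm_zero]; positivity
    · have := h j hj0 (by omega); positivity
  calc (0 : ℝ) < ((card s - m).choose (card s - m) : ℝ) * s.esymm m * t ^ (m - m) := by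
        simpa using h m hm1 hmk
    _ ≤ _ := Finset.single_le_sum hterm (Finset.mem_range.2 (by omega))

theorem of_cons_of_nonneg {a : ℝ} (h : InGardingCone (k + 1) (a ::ₘ s))
    (hs : ∀ m, 1 ≤ m → m ≤ k → 0 ≤ s.esymm m) : InGardingCone k s := by
  suffices ∀ m ≤ k, 0 < s.esymm m from fun m _ hm => this m hm
  intro m hm
  induction m with
  | zero => simp [esymm_zero]
  | succ m ih =>
    refine (hs (m + 1) (by omega) hm).lt_of_ne' fun h0 => ?_
    have h2 := h (m + 1 + 1) (by omega) (by omega)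
    rw [esymm_cons, h0, mul_zero, add_zero] at h2
    exact (esymm_add_two_nonpos (ih (by omega)) h0).not_gt h2

theorem of_cons {a : ℝ} (h : InGardingCone (k + 1) (a ::ₘ s)) : InGardingCone k s := by
  by_contra hs
  obtain ⟨m₀, hm₀1, hm₀k, hm₀⟩ : ∃ m, 1 ≤ m ∧ m ≤ k ∧ s.esymm m ≤ 0 := by
    simpa [InGardingCone] using hs
  have hne : (Finset.Icc 1 k).Nonempty := ⟨m₀, Finset.mem_Icc.2 ⟨hm₀1, hm₀k⟩⟩
  set g : ℝ → ℝ := fun t => (Finset.Icc 1 k).inf' hne fun m => (s.map (· + t)).esymm m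
  have hg : Continuous g :=
    Continuous.finset_inf'_apply hne fun m _ => continuous_esymm_map_add_const s m
  have hg0 : g 0 ≤ 0 :=
    (Finset.inf'_le _ (Finset.mem_Icc.2 ⟨hm₀1, hm₀k⟩)).trans (by simpa using hm₀)
  obtain ⟨M, hM⟩ := s.toFinset.bddBelow
  have hg1 : 0 < g (|M| + 1) := by
    refine (Finset.lt_inf'_iff hne).2 fun m hm => ?_
    rw [Finset.mem_Icc] at hm
    refine of_forall_pos (fun b hb => ?_) (by simpa using h.le_card) m hm.1 hm.2
    obtain ⟨r, hr, rfl⟩ := mem_map.1 hb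
    have := hM (mem_toFinset.2 hr)
    linarith [neg_abs_le M]
  obtain ⟨T, hT, hgT⟩ :=
    intermediate_value_Icc (by positivity) hg.continuousOn ⟨hg0, hg1.le⟩
  have hTcone := h.map_add_const hT.1
  rw [map_cons] at hTcone
  have hnn : ∀ m, 1 ≤ m → m ≤ k → 0 ≤ (s.map (· + T)).esymm m := fun m h1 h2 =>
    hgT ▸ Finset.inf'_le _ (Finset.mem_Icc.2 ⟨h1, h2⟩)
  obtain ⟨m, hm, hgm⟩ := Finset.exists_mem_eq_inf' hne fun m => (s.map (· + T)).esymm m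
  rw [Finset.mem_Icc] at hm
  have := of_cons_of_nonneg hTcone hnn m hm.1 hm.2
  exact this.ne' (hgm ▸ hgT)

theorem of_add {t : Multiset ℝ} (h : InGardingCone (k + card t) (s + t)) :
    InGardingCone k s := by
  induction t using Multiset.induction_on with
  | empty => simpa using h
  | cons a t ih =>
    rw [add_cons, card_cons, ← add_assoc] at h
    exact ih h.of_cons

end InGardingCone

end Multiset

open Finset

section

variable {ι : Type*} {s : Finset ι} {x : ι → ℝ} {M : ℝ}

theorem pos_of_sum_pos_of_forall_le (h : 0 < ∑ i ∈ s, x i) (hM : ∀ i ∈ s, x i ≤ M) : 0 < M := by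
  by_contra! hM0
  exact h.not_ge (sum_nonpos fun i hi => (hM i hi).trans hM0)

theorem abs_le_card_mul_of_sum_pos [DecidableEq ι] (h : 0 < ∑ i ∈ s, x i)
    (hM : ∀ i ∈ s, x i ≤ M) {i : ι} (hi : i ∈ s) : |x i| ≤ #s * M := by
  have hM0 := pos_of_sum_pos_of_forall_le h hM
  have hcard : (1 : ℝ) ≤ #s := by exact_mod_cast card_pos.2 ⟨i, hi⟩
  have hrest : ∑ j ∈ s.erase i, x j ≤ (#s - 1 : ℝ) * M := by
    have := sum_le_card_nsmul (s.erase i) x M fun j hj => hM j (mem_of_mem_erase hj)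
    rwa [card_erase_of_mem hi, nsmul_eq_mul, Nat.cast_pred (card_pos.2 ⟨i, hi⟩)] at this
  rw [← add_sum_erase s x hi] at h
  rw [abs_le]
  constructor <;> nlinarith [hM i hi]

theorem prod_le_pow_card_sdiff_mul_prod [DecidableEq ι] {t J : Finset ι} {c : ℝ} (hc : 0 ≤ c)
    (hM : 0 ≤ M) (hcard : #t = #J) (hJ : ∀ j ∈ J, M ≤ x j) (ht : ∀ i ∈ t \ J, |x i| ≤ c * M) :
    ∏ i ∈ t, x i ≤ c ^ #(t \ J) * ∏ j ∈ J, x j := by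
  have hx : ∀ j ∈ J, 0 ≤ x j := fun j hj => hM.trans (hJ j hj)
  have hxt : ∀ j ∈ J ∩ t, 0 ≤ x j := fun j hj => hx j (mem_inter.1 hj).1
  calc ∏ i ∈ t, x i ≤ |∏ i ∈ t, x i| := le_abs_self _
    _ = (∏ i ∈ J ∩ t, x i) * ∏ i ∈ t \ J, |x i| := by
        rw [abs_prod, ← prod_inter_mul_prod_sdiff t J, inter_comm,
          prod_congr rfl fun j hj => abs_of_nonneg (hxt j hj)]
    _ ≤ (∏ i ∈ J ∩ t, x i) * ∏ _i ∈ t \ J, c * M := by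
        gcongr with i hi
        · exact prod_nonneg hxt
        · exact ht i hi
    _ = (∏ i ∈ J ∩ t, x i) * (c ^ #(t \ J) * ∏ _i ∈ J \ t, M) := by
        rw [prod_const, prod_const, card_sdiff_comm hcard, mul_pow]
    _ ≤ (∏ i ∈ J ∩ t, x i) * (c ^ #(t \ J) * ∏ i ∈ J \ t, x i) := by
        gcongr with i hi
        · exact prod_nonneg hxt
        · exact hJ i (mem_sdiff.1 hi).1
    _ = c ^ #(t \ J) * ∏ j ∈ J, x j := by
        rw [← prod_inter_mul_prod_sdiff J t]; ring

theorem sum_compl_pos_of_inGardingCone [Fintype ι] [DecidableEq ι]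
    (h : Multiset.InGardingCone (#s + 1) (univ.val.map x)) : 0 < ∑ i ∈ sᶜ, x i := by
  have huniv : univ.val.map x = sᶜ.val.map x + s.val.map x := by
    rw [← Multiset.map_add, add_comm, ← union_compl s,
      ← disjUnion_eq_union _ _ disjoint_compl_right]
    rfl
  have hcone : Multiset.InGardingCone (1 + Multiset.card (s.val.map x))
      (sᶜ.val.map x + s.val.map x) := by
    rwa [Multiset.card_map, add_comm, ← huniv]
  have h1 := hcone.of_add 1 le_rfl le_rfl
  simpa [Finset.esymm_map_val, powersetCard_one] using h1

end

theorem esymmRes_le_two_pow_mul {n m : ℕ} {s : Finset (Fin n)} {x : Fin n → ℝ} {B : ℝ}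
    (hB : 0 ≤ B) (h : ∀ t ∈ powersetCard m s, ∏ i ∈ t, x i ≤ B) :
    esymmRes n s m x ≤ 2 ^ n * B := by
  calc esymmRes n s m x ≤ #(powersetCard m s) • B := sum_le_card_nsmul _ _ _ h
    _ ≤ 2 ^ n * B := by
      rw [nsmul_eq_mul, card_powersetCard]
      gcongr
      calc ((#s).choose m : ℝ) ≤ (2 ^ #s : ℕ) := by exact_mod_cast Nat.choose_le_two_pow _ _
        _ ≤ 2 ^ n := by
          push_cast
          exact pow_le_pow_right₀ (by norm_num) (by simpa using card_le_univ s)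

theorem esymmRes_compl_pair_le {n : ℕ} {lam : Fin n → ℝ} (hanti : Antitone lam) {p a b : Fin n}
    (hpos : 0 < lam p) (hbound : ∀ i, p ≤ i → |lam i| ≤ n * lam p)
    (ha : a < p) (hb : b < p) (hab : a ≠ b) :
    esymmRes n {a, b}ᶜ ((p : ℕ) - 1) lam
      ≤ (2 * n) ^ n * (∏ i ∈ Iic p, lam i) / (lam a * lam b) := by
  set J := Iic p \ {a, b}
  have hsub : {a, b} ⊆ Iic p := by simp [insert_subset_iff, ha.le, hb.le]
  have hJcard : #J = p - 1 := by
    rw [card_sdiff_of_subset hsub, card_pair hab, Fin.card_Iic]; omega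
  have hJ : ∀ j ∈ J, lam p ≤ lam j := fun j hj => hanti (mem_Iic.1 (mem_sdiff.1 hj).1)
  have hJprod : 0 ≤ ∏ j ∈ J, lam j := prod_nonneg fun j hj => hpos.le.trans (hJ j hj)
  have hn : (1 : ℝ) ≤ n := by exact_mod_cast p.pos
  have hab0 : 0 < lam a * lam b :=
    mul_pos (hpos.trans_le (hanti ha.le)) (hpos.trans_le (hanti hb.le))
  rw [← prod_sdiff hsub, prod_pair hab, ← mul_assoc, mul_div_cancel_right₀ _ hab0.ne', mul_pow,
    mul_assoc]
  refine esymmRes_le_two_pow_mul (by positivity) fun t ht => ?_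
  rw [mem_powersetCard] at ht
  have htJ : ∀ i ∈ t \ J, |lam i| ≤ n * lam p := by
    intro i hi
    have hiab : i ∉ ({a, b} : Finset (Fin n)) := mem_compl.1 (ht.1 (mem_sdiff.1 hi).1)
    have hiJ : i ∉ J := (mem_sdiff.1 hi).2
    exact hbound i (le_of_lt (by simpa [J, hiab] using hiJ))
  calc ∏ i ∈ t, lam i ≤ (n : ℝ) ^ #(t \ J) * ∏ j ∈ J, lam j :=
        prod_le_pow_card_sdiff_mul_prod n.cast_nonneg hpos.le (ht.2.trans hJcard.symm) hJ htJ
    _ ≤ (n : ℝ) ^ n * ∏ j ∈ J, lam j := by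
        gcongr
        simpa using card_le_univ (t \ J)

theorem stmt6 (n μ : ℕ) (hμ : 1 ≤ μ) (hμn : μ ≤ n - 2) :
    ∃ C : ℝ, 0 < C ∧
      ∀ lam : Fin n → ℝ,
        (∀ m, 1 ≤ m → m ≤ μ + 2 → 0 < esymm n m lam) →
        (∀ i j : Fin n, i ≤ j → lam j ≤ lam i) →
        -- `|λ_i| ≤ C·λ_{μ+1}` for all `i ≥ μ+1` (1-based), i.e. index `≥ μ` (0-based)
        ((∀ i : Fin n, μ ≤ (i : ℕ) → |lam i| ≤ C * lam ⟨μ, by omega⟩) ∧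
        -- `σ_{μ−1}(λ|ab) ≤ C·(λ₁⋯λ_{μ+1})/(λ_a λ_b)` for distinct `a, b ≤ μ` (1-based)
        ∀ a b : Fin n, (a : ℕ) < μ → (b : ℕ) < μ → a ≠ b →
          esymmRes n ({a, b} : Finset (Fin n))ᶜ (μ - 1) lam
            ≤ C * (∏ i ∈ Finset.univ.filter (fun i : Fin n => (i : ℕ) < μ + 1), lam i)
                / (lam a * lam b)) := by
  have hn : (1 : ℝ) ≤ n := by exact_mod_cast (by omega : 1 ≤ n)
  refine ⟨(2 * n) ^ n, by positivity, fun lam hΓ hanti => ?_⟩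
  set p : Fin n := ⟨μ, by omega⟩
  have hp : (p : ℕ) = μ := rfl
  have hcone : Multiset.InGardingCone (#(Iio p) + 1) (univ.val.map lam) := fun m hm1 hm => by
    rw [Finset.esymm_map_val]
    exact hΓ m hm1 (by rw [Fin.card_Iio, hp] at hm; omega)
  have htail := sum_compl_pos_of_inGardingCone hcone
  have hle : ∀ i ∈ (Iio p)ᶜ, lam i ≤ lam p := fun i hi => hanti p i (by simpa using hi)
  have hpos : 0 < lam p := pos_of_sum_pos_of_forall_le htail hle
  have hbound : ∀ i, p ≤ i → |lam i| ≤ n * lam p := fun i hi =>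
    (abs_le_card_mul_of_sum_pos htail hle (by simpa using hi)).trans
      (by gcongr; simpa using card_le_univ (Iio p)ᶜ)
  have hT : univ.filter (fun i : Fin n => (i : ℕ) < μ + 1) = Iic p := by
    ext i; simp [p, Fin.le_def]
  refine ⟨fun i hi => (hbound i hi).trans ?_, fun a b ha hb hab => ?_⟩
  · gcongr
    calc (n : ℝ) ≤ 2 * n := by linarith
      _ ≤ (2 * n) ^ n := le_self_pow₀ (by linarith) (by omega)
  · rw [hT]
    exact esymmRes_compl_pair_le (fun i j h => hanti i j h) hpos hbound ha hb hab
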